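/- Let ζ > 0 and let u : [0,∞)×ℝ^N → ℝ be continuous, nonnegative, bounded on [0,T]×ℝ^N for every T>0, C¹ in t and C² in x on (0,∞)×ℝ^N, with compactly supported initial datum u(0,·), and satisfying the differential inequality ∂_t u ≤ Δu + ζ u pointwise on (0,∞)×ℝ^N. Then for every c > 2√ζ one has lim_{t→∞} sup_{|x| ≥ ct} u(t,x) = 0; that is, the linear equation ∂_t u = Δu + ζu has finite speed of spreading c* = 2√ζ. -/

import Mathlib

/-!
Comparison with plane waves. For a unit vector `e` and `k ≥ 0`, the plane wave
`A exp((k² + ζ) t - k ⟪x, e⟫)` solves `∂ₜw = Δw + ζw`, and a large amplitude `A` puts it above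
the compactly supported initial datum. The comparison principle, which follows from the weak
maximum principle for bounded heat subsolutions applied to `e^{-ζt} (u - w)`, keeps `u ≤ w` for all
time. The wave travels at speed `(k² + ζ) / k`, which is `2√ζ` for `k = √ζ`; taking `e = x / ‖x‖`
gives `u(t, x) ≤ A exp(-(√ζ c - 2ζ) t)` on `‖x‖ ≥ ct`.

The maximum principle itself: if `v ≤ 0` initially and `v(t, x) > 0`, then
`v - δ((2N + 1)t + ‖x‖²)` has a positive maximum on `[0, t] × ℝᴺ` at a positive time, where
`∂ₜv ≥ δ(2N + 1) > 2Nδ ≥ Δv` contradicts `∂ₜv ≤ Δv`.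
-/

open Filter Metric Set

/-- The Laplacian of a function on Euclidean space, as the sum of second partial
derivatives in the coordinate directions. -/
noncomputable def laplacian {N : ℕ} (φ : EuclideanSpace ℝ (Fin N) → ℝ)
    (x : EuclideanSpace ℝ (Fin N)) : ℝ :=
  ∑ i : Fin N, fderiv ℝ (fun y => fderiv ℝ φ y (EuclideanSpace.single i (1:ℝ))) x
    (EuclideanSpace.single i (1:ℝ))

open Topology RealInnerProductSpace Real
open scoped Laplacian

theorem exists_isMaxOn_sub_mul_norm_sq {X E : Type*} [TopologicalSpace X] [NormedAddCommGroup E]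
    [ProperSpace E] {K : Set X} (hK : IsCompact K) {f : X × E → ℝ}
    (hf : ContinuousOn f (K ×ˢ univ)) {C : ℝ} (hC : ∀ p ∈ K ×ˢ univ, f p ≤ C) {δ : ℝ}
    (hδ : 0 < δ) {p₀ : X × E} (hp₀ : p₀ ∈ K ×ˢ univ) :
    ∃ p ∈ K ×ˢ univ, IsMaxOn (fun p => f p - δ * ‖p.2‖ ^ 2) (K ×ˢ univ) p := by
  set g : X × E → ℝ := fun p => f p - δ * ‖p.2‖ ^ 2
  obtain ⟨ρ, hρp₀, hρ⟩ : ∃ ρ, ‖p₀.2‖ ≤ ρ ∧ C - g p₀ < δ * ρ ^ 2 :=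
    ((eventually_ge_atTop _).and
      (((tendsto_pow_atTop two_ne_zero).const_mul_atTop hδ).eventually_gt_atTop _)).exists
  have hball : K ×ˢ closedBall (0 : E) ρ ⊆ K ×ˢ univ := prod_mono_right (subset_univ _)
  obtain ⟨p, hp, hmax⟩ := (hK.prod (isCompact_closedBall 0 ρ)).exists_isMaxOn
    ⟨p₀, hp₀.1, mem_closedBall_zero_iff.2 hρp₀⟩
    ((hf.mono hball).sub (continuous_const.mul (continuous_snd.norm.pow 2)).continuousOn)
  refine ⟨p, hball hp, fun q hq => ?_⟩
  by_cases hqρ : ‖q.2‖ ≤ ρ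
  · exact hmax ⟨hq.1, mem_closedBall_zero_iff.2 hqρ⟩
  · have hp₀p : g p₀ ≤ g p := hmax ⟨hp₀.1, mem_closedBall_zero_iff.2 hρp₀⟩
    have : δ * ρ ^ 2 ≤ δ * ‖q.2‖ ^ 2 := by gcongr <;> linarith [norm_nonneg p₀.2]
    show g q ≤ g p
    linarith [hC q hq]

theorem HasDerivAt.nonneg_of_isMaxOn_Icc {f : ℝ → ℝ} {f' a b t : ℝ} (hf : HasDerivAt f f' t)
    (hmax : IsMaxOn f (Icc a b) t) (hat : a < t) (htb : t ≤ b) : 0 ≤ f' := by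
  have hcone : a - t ∈ posTangentConeAt (Icc a b) t := by
    refine mem_posTangentConeAt_of_segment_subset ?_
    rw [add_sub_cancel, segment_eq_Icc', min_eq_right hat.le, max_eq_left hat.le]
    exact Icc_subset_Icc le_rfl htb
  have := hmax.localize.hasFDerivWithinAt_nonpos hf.hasFDerivAt.hasFDerivWithinAt hcone
  simp only [ContinuousLinearMap.toSpanSingleton_apply, smul_eq_mul] at this
  nlinarith

theorem deriv_deriv_eq_of_hasDerivAt {F : Type*} [NormedAddCommGroup F] [NormedSpace ℝ F]
    {f f' : ℝ → F} {f'' : F} {t : ℝ}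
    (hf : ∀ s, HasDerivAt f (f' s) s) (hf' : HasDerivAt f' f'' t) : deriv (deriv f) t = f'' := by
  rw [funext fun s => (hf s).deriv]
  exact hf'.deriv

theorem IsLocalMax.deriv_deriv_nonpos {f : ℝ → ℝ} {x : ℝ} (hmax : IsLocalMax f x)
    (hc : ContinuousAt f x) : deriv (deriv f) x ≤ 0 := by
  by_contra! hpos
  have hconst : f =ᶠ[𝓝 x] fun _ => f x :=
    (hmax.and (isLocalMin_of_deriv_deriv_pos hpos hmax.deriv_eq_zero hc)).mono
      fun y hy => le_antisymm hy.1 hy.2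
  have : deriv f =ᶠ[𝓝 x] fun _ => 0 := by
    simpa using hconst.deriv
  simp [this.deriv_eq] at hpos

theorem le_mul_exp_of_tsupport_subset {E : Type*} [NormedAddCommGroup E] [InnerProductSpace ℝ E]
    {f : E → ℝ} {M R k : ℝ} (hM : ∀ x, f x ≤ M) (hM0 : 0 ≤ M) (hR : tsupport f ⊆ closedBall 0 R)
    (hk : 0 ≤ k) {e : E} (he : ‖e‖ ≤ 1) (x : E) : f x ≤ M * exp (k * (R - ⟪x, e⟫)) := by
  by_cases hx : ⟪x, e⟫ ≤ R
  · calc f x ≤ M := hM x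
      _ ≤ M * exp (k * (R - ⟪x, e⟫)) :=
        le_mul_of_one_le_right hM0 (one_le_exp (mul_nonneg hk (sub_nonneg.2 hx)))
  · have hxR : R < ‖x‖ :=
      (not_le.1 hx).trans_le <|
        (real_inner_le_norm x e).trans (mul_le_of_le_one_right (norm_nonneg x) he)
    rw [image_eq_zero_of_notMem_tsupport fun h => (mem_closedBall_zero_iff.1 (hR h)).not_gt hxR]
    positivity

section DirectionalDerivatives

variable {E F : Type*} [NormedAddCommGroup E] [NormedSpace ℝ E] [NormedAddCommGroup F]
  [NormedSpace ℝ F]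

theorem hasDerivAt_add_smul (x v : E) (s : ℝ) : HasDerivAt (fun s : ℝ => x + s • v) v s := by
  simpa using ((hasDerivAt_id s).smul_const v).const_add x

theorem fderiv_fderiv_apply_eq_deriv_deriv {φ : E → F} (hφ : ContDiff ℝ 2 φ) (x v : E) :
    fderiv ℝ (fun y => fderiv ℝ φ y v) x v = deriv (deriv fun s : ℝ => φ (x + s • v)) 0 := by
  have hderiv : deriv (fun s : ℝ => φ (x + s • v)) = fun s => fderiv ℝ φ (x + s • v) v := by
    funext s
    exact ((hφ.differentiable two_ne_zero _).hasFDerivAt.comp_hasDerivAt s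
      (hasDerivAt_add_smul x v s)).deriv
  have hφ' : ContDiff ℝ 1 fun y => fderiv ℝ φ y v :=
    (ContinuousLinearMap.apply ℝ F v).contDiff.comp (hφ.fderiv_right le_rfl)
  have h := ((hφ'.differentiable one_ne_zero _).hasFDerivAt.comp_hasDerivAt 0
    (hasDerivAt_add_smul x v 0)).deriv
  simp only [Function.comp_def, zero_smul, add_zero] at h
  rw [hderiv, h]

end DirectionalDerivatives

section Laplacian

variable {N : ℕ}

theorem laplacian_eq_sum_deriv_deriv {φ : EuclideanSpace ℝ (Fin N) → ℝ} (hφ : ContDiff ℝ 2 φ)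
    (x : EuclideanSpace ℝ (Fin N)) :
    laplacian φ x = ∑ i, deriv (deriv fun s : ℝ => φ (x + s • EuclideanSpace.single i 1)) 0 :=
  Finset.sum_congr rfl fun _ _ => fderiv_fderiv_apply_eq_deriv_deriv hφ x _

theorem laplacian_eq_laplacian {φ : EuclideanSpace ℝ (Fin N) → ℝ} (hφ : ContDiff ℝ 2 φ) :
    laplacian φ = Δ φ := by
  ext x
  rw [InnerProductSpace.laplacian_eq_iteratedFDeriv_orthonormalBasis φ
    (EuclideanSpace.basisFun (Fin N) ℝ)]
  refine Finset.sum_congr rfl fun _ _ => ?_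
  have hφ' : Differentiable ℝ (fderiv ℝ φ) := (hφ.fderiv_right le_rfl).differentiable one_ne_zero
  simp [iteratedFDeriv_two_apply, fderiv_clm_apply (hφ' x) (differentiableAt_const _)]

variable {φ ψ : EuclideanSpace ℝ (Fin N) → ℝ} {x : EuclideanSpace ℝ (Fin N)}

theorem laplacian_sub (hφ : ContDiff ℝ 2 φ) (hψ : ContDiff ℝ 2 ψ) :
    laplacian (fun y => φ y - ψ y) x = laplacian φ x - laplacian ψ x := by
  rw [laplacian_eq_laplacian hφ, laplacian_eq_laplacian hψ, laplacian_eq_laplacian (hφ.sub hψ)]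
  exact hφ.contDiffAt.laplacian_sub hψ.contDiffAt

theorem laplacian_const_mul (c : ℝ) (hφ : ContDiff ℝ 2 φ) :
    laplacian (fun y => c * φ y) x = c * laplacian φ x := by
  rw [laplacian_eq_laplacian hφ, laplacian_eq_laplacian (contDiff_const.mul hφ)]
  exact InnerProductSpace.laplacian_smul c hφ.contDiffAt

theorem laplacian_nonpos_of_isLocalMax (hφ : ContDiff ℝ 2 φ) (hmax : IsLocalMax φ x) :
    laplacian φ x ≤ 0 := by
  rw [laplacian_eq_sum_deriv_deriv hφ]
  refine Finset.sum_nonpos fun i _ => IsLocalMax.deriv_deriv_nonpos ?_ ?_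
  · refine IsLocalMax.comp_continuous (g := fun s : ℝ => x + s • EuclideanSpace.single i 1) ?_ ?_
    · simpa using hmax
    · fun_prop
  · exact (hφ.continuous.comp (by fun_prop)).continuousAt

theorem laplacian_norm_sq : laplacian (fun y => ‖y‖ ^ 2) x = 2 * N := by
  have hline (i : Fin N) : (fun s : ℝ => ‖x + s • EuclideanSpace.single i 1‖ ^ 2) =
      fun s => ‖x‖ ^ 2 + 2 * x i * s + s ^ 2 := by
    funext s
    rw [norm_add_sq_real, real_inner_smul_right, EuclideanSpace.inner_single_right, norm_smul,
      PiLp.norm_single]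
    simp only [conj_trivial, one_mul, norm_one, mul_one, Real.norm_eq_abs, sq_abs]
    ring
  have hquad (a b : ℝ) : deriv (deriv fun s => a + b * s + s ^ 2) 0 = 2 := by
    refine deriv_deriv_eq_of_hasDerivAt (f' := fun s => b + 2 * s) (fun s => ?_) ?_
    · exact ((((hasDerivAt_id s).const_mul b).const_add a).add (hasDerivAt_pow 2 s)).congr_deriv
        (by simp)
    · simpa using ((hasDerivAt_id (0 : ℝ)).const_mul 2).const_add b
  simp only [laplacian_eq_sum_deriv_deriv (contDiff_norm_sq ℝ), hline, hquad, Finset.sum_const,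
    Finset.card_univ, Fintype.card_fin, nsmul_eq_mul]
  ring

end Laplacian

noncomputable def planeWave {N : ℕ} (ζ A k : ℝ) (e : EuclideanSpace ℝ (Fin N)) (t : ℝ)
    (x : EuclideanSpace ℝ (Fin N)) : ℝ :=
  A * exp ((k ^ 2 + ζ) * t - k * ⟪x, e⟫)

section PlaneWave

variable {N : ℕ} (ζ A k : ℝ) (e : EuclideanSpace ℝ (Fin N))

theorem continuous_uncurry_planeWave : Continuous (Function.uncurry (planeWave ζ A k e)) := by
  unfold planeWave; fun_prop

theorem contDiff_planeWave (t : ℝ) : ContDiff ℝ 2 (planeWave ζ A k e t) :=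
  contDiff_const.mul <| Real.contDiff_exp.comp <| contDiff_const.sub <| contDiff_const.mul <|
    contDiff_id.inner ℝ contDiff_const

theorem planeWave_nonneg {A : ℝ} (hA : 0 ≤ A) (t : ℝ) (x : EuclideanSpace ℝ (Fin N)) :
    0 ≤ planeWave ζ A k e t x := by
  unfold planeWave; positivity

theorem planeWave_inv_norm_smul_self (t : ℝ) (x : EuclideanSpace ℝ (Fin N)) :
    planeWave ζ A k (‖x‖⁻¹ • x) t x = A * exp ((k ^ 2 + ζ) * t - k * ‖x‖) := by
  rcases eq_or_ne x 0 with rfl | hx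
  · simp [planeWave]
  · simp [planeWave, real_inner_smul_right, hx, sq]

theorem hasDerivAt_planeWave (t : ℝ) (x : EuclideanSpace ℝ (Fin N)) :
    HasDerivAt (fun s => planeWave ζ A k e s x) ((k ^ 2 + ζ) * planeWave ζ A k e t x) t := by
  unfold planeWave
  exact ((((hasDerivAt_id t).const_mul (k ^ 2 + ζ)).sub_const (k * ⟪x, e⟫)).exp.const_mul
    A).congr_deriv (by simp only [id_eq, mul_one]; ring)

theorem laplacian_planeWave (t : ℝ) (x : EuclideanSpace ℝ (Fin N)) :
    laplacian (planeWave ζ A k e t) x = k ^ 2 * ‖e‖ ^ 2 * planeWave ζ A k e t x := by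
  have hline (i : Fin N) : (fun s : ℝ => planeWave ζ A k e t (x + s • EuclideanSpace.single i 1)) =
      fun s => A * exp (((k ^ 2 + ζ) * t - k * ⟪x, e⟫) - k * e i * s) := by
    funext s
    simp only [planeWave, inner_add_left, real_inner_smul_left, EuclideanSpace.inner_single_left,
      conj_trivial]
    ring_nf
  have hexp (b c : ℝ) : deriv (deriv fun s => A * exp (b - c * s)) 0 = c ^ 2 * (A * exp b) := by
    have h (d s : ℝ) : HasDerivAt (fun s => d * exp (b - c * s)) (-c * d * exp (b - c * s)) s :=
      ((((hasDerivAt_id s).const_mul c).const_sub b).exp.const_mul d).congr_deriv (by simp only [id_eq, mul_one, mul_neg, neg_mul, neg_inj]; ring)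
    rw [deriv_deriv_eq_of_hasDerivAt (fun s => h A s) (h (-c * A) 0)]
    simp only [neg_mul, mul_neg, neg_neg, mul_zero, sub_zero]; ring
  rw [laplacian_eq_sum_deriv_deriv (contDiff_planeWave ζ A k e t)]
  simp only [hline, hexp, EuclideanSpace.real_norm_sq_eq, Finset.mul_sum, Finset.sum_mul]
  exact Finset.sum_congr rfl fun i _ => by rw [planeWave]; ring

theorem deriv_planeWave_eq_laplacian_add (he : ‖e‖ = 1) (t : ℝ) (x : EuclideanSpace ℝ (Fin N)) :
    deriv (fun s => planeWave ζ A k e s x) t =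
      laplacian (planeWave ζ A k e t) x + ζ * planeWave ζ A k e t x := by
  rw [(hasDerivAt_planeWave ζ A k e t x).deriv, laplacian_planeWave, he]
  ring

end PlaneWave

section HeatEquation

variable {N : ℕ}

theorem not_isMaxOn_heat_subsolution_sub_penalty {v : ℝ → EuclideanSpace ℝ (Fin N) → ℝ}
    {δ T t₀ : ℝ} {x₀ : EuclideanSpace ℝ (Fin N)} (hδ : 0 < δ) (ht₀ : 0 < t₀) (ht₀T : t₀ ≤ T)
    (htdiff : DifferentiableAt ℝ (fun s => v s x₀) t₀) (hxdiff : ContDiff ℝ 2 (v t₀))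
    (hsub : deriv (fun s => v s x₀) t₀ ≤ laplacian (v t₀) x₀) :
    ¬ IsMaxOn (fun p => v p.1 p.2 - δ * ((2 * N + 1) * p.1) - δ * ‖p.2‖ ^ 2)
      (Icc 0 T ×ˢ univ) (t₀, x₀) := by
  intro hmax
  have htime : δ * (2 * N + 1) ≤ deriv (fun s => v s x₀) t₀ := by
    have hderiv : HasDerivAt (fun s => v s x₀ - δ * ((2 * N + 1) * s) - δ * ‖x₀‖ ^ 2)
        (deriv (fun s => v s x₀) t₀ - δ * (2 * N + 1)) t₀ :=
      ((htdiff.hasDerivAt.sub (((hasDerivAt_id t₀).const_mul (2 * (N : ℝ) + 1)).const_mul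
        δ)).sub_const (δ * ‖x₀‖ ^ 2)).congr_deriv (by ring)
    have := hderiv.nonneg_of_isMaxOn_Icc
      (fun s hs => hmax (show (s, x₀) ∈ Icc 0 T ×ˢ univ from ⟨hs, trivial⟩)) ht₀ ht₀T
    linarith
  have hspace : laplacian (v t₀) x₀ ≤ 2 * N * δ := by
    have hnorm : ContDiff ℝ 2 fun y : EuclideanSpace ℝ (Fin N) => δ * ‖y‖ ^ 2 :=
      contDiff_const.mul (contDiff_norm_sq ℝ)
    have hloc : IsLocalMax (fun y => v t₀ y - δ * ‖y‖ ^ 2) x₀ := by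
      refine IsMaxOn.isLocalMax (isMaxOn_univ_iff.2 fun y => ?_) univ_mem
      have : v t₀ y - δ * ((2 * N + 1) * t₀) - δ * ‖y‖ ^ 2 ≤
          v t₀ x₀ - δ * ((2 * N + 1) * t₀) - δ * ‖x₀‖ ^ 2 :=
        hmax (show (t₀, y) ∈ Icc 0 T ×ˢ univ from ⟨⟨ht₀.le, ht₀T⟩, trivial⟩)
      linarith
    have := laplacian_nonpos_of_isLocalMax (hxdiff.sub hnorm) hloc
    rw [laplacian_sub hxdiff hnorm, laplacian_const_mul δ (contDiff_norm_sq ℝ),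
      laplacian_norm_sq] at this
    linarith
  linarith

theorem heat_subsolution_nonpos {v : ℝ → EuclideanSpace ℝ (Fin N) → ℝ}
    (hcont : ContinuousOn (Function.uncurry v) (Ici 0 ×ˢ univ))
    (hbdd : ∀ T > (0 : ℝ), ∃ C, ∀ t ∈ Icc 0 T, ∀ x, v t x ≤ C)
    (htdiff : ∀ x, ∀ t > (0 : ℝ), DifferentiableAt ℝ (fun s => v s x) t)
    (hxdiff : ∀ t > (0 : ℝ), ContDiff ℝ 2 (v t))
    (hsub : ∀ t > (0 : ℝ), ∀ x, deriv (fun s => v s x) t ≤ laplacian (v t) x)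
    (h0 : ∀ x, v 0 x ≤ 0) {t : ℝ} (ht : 0 ≤ t) (x : EuclideanSpace ℝ (Fin N)) : v t x ≤ 0 := by
  by_contra! hpos
  obtain ⟨δ, hδ, hδx⟩ := exists_pos_mul_lt hpos ((2 * N + 1) * t + ‖x‖ ^ 2)
  obtain ⟨C, hC⟩ := hbdd (t + 1) (by linarith)
  -- the penalty makes `ψ` attain its maximum, and makes both first-order conditions there strict
  set ψ : ℝ × EuclideanSpace ℝ (Fin N) → ℝ :=
    fun p => v p.1 p.2 - δ * ((2 * N + 1) * p.1) - δ * ‖p.2‖ ^ 2 with hψ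
  obtain ⟨⟨t₀, x₀⟩, ⟨ht₀, -⟩, hmax⟩ : ∃ p ∈ Icc 0 t ×ˢ univ, IsMaxOn ψ (Icc 0 t ×ˢ univ) p := by
    refine exists_isMaxOn_sub_mul_norm_sq isCompact_Icc ?_ (C := C) ?_ hδ
      (p₀ := (t, x)) ⟨⟨ht, le_rfl⟩, trivial⟩
    · exact (hcont.mono fun p hp => ⟨hp.1.1, trivial⟩).sub (by fun_prop)
    · rintro ⟨s, y⟩ ⟨hs, -⟩
      have := hC s ⟨hs.1, by linarith [hs.2]⟩ y
      have : 0 ≤ δ * ((2 * N + 1) * s) := by have := hs.1; positivity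
      dsimp only
      linarith
  have hψ₀ : 0 < ψ (t₀, x₀) :=
    (by simp only [hψ]; linarith : 0 < ψ (t, x)).trans_le (hmax ⟨⟨ht, le_rfl⟩, trivial⟩)
  have ht₀_pos : 0 < t₀ := by
    refine ht₀.1.lt_of_ne fun h => ?_
    subst h
    have : 0 ≤ δ * ‖x₀‖ ^ 2 := by positivity
    simp only [hψ, mul_zero, sub_zero] at hψ₀
    linarith [h0 x₀]
  exact not_isMaxOn_heat_subsolution_sub_penalty hδ ht₀_pos ht₀.2 (htdiff x₀ t₀ ht₀_pos)
    (hxdiff t₀ ht₀_pos) (hsub t₀ ht₀_pos x₀) hmax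

theorem subsolution_le_supersolution {ζ : ℝ} {u w : ℝ → EuclideanSpace ℝ (Fin N) → ℝ}
    (hu_cont : ContinuousOn (Function.uncurry u) (Ici 0 ×ˢ univ))
    (hw_cont : ContinuousOn (Function.uncurry w) (Ici 0 ×ˢ univ))
    (hbdd : ∀ T > (0 : ℝ), ∃ C, ∀ t ∈ Icc 0 T, ∀ x, u t x - w t x ≤ C)
    (hu_t : ∀ x, ∀ t > (0 : ℝ), DifferentiableAt ℝ (fun s => u s x) t)
    (hw_t : ∀ x, ∀ t > (0 : ℝ), DifferentiableAt ℝ (fun s => w s x) t)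
    (hu_x : ∀ t > (0 : ℝ), ContDiff ℝ 2 (u t)) (hw_x : ∀ t > (0 : ℝ), ContDiff ℝ 2 (w t))
    (hu : ∀ t > (0 : ℝ), ∀ x, deriv (fun s => u s x) t ≤ laplacian (u t) x + ζ * u t x)
    (hw : ∀ t > (0 : ℝ), ∀ x, laplacian (w t) x + ζ * w t x ≤ deriv (fun s => w s x) t)
    (h0 : ∀ x, u 0 x ≤ w 0 x) {t : ℝ} (ht : 0 ≤ t) (x : EuclideanSpace ℝ (Fin N)) :
    u t x ≤ w t x := by
  suffices exp (-ζ * t) * (u t x - w t x) ≤ 0 from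
    sub_nonpos.1 (nonpos_of_mul_nonpos_right this (exp_pos _))
  refine heat_subsolution_nonpos (v := fun s y => exp (-ζ * s) * (u s y - w s y)) ?_ ?_ ?_ ?_ ?_
    (fun y => by simpa using h0 y) ht x
  · exact (continuous_exp.comp (continuous_const.mul continuous_fst)).continuousOn.mul
      (hu_cont.sub hw_cont)
  · intro T hT
    obtain ⟨C, hC⟩ := hbdd T hT
    refine ⟨exp (|ζ| * T) * max C 0, fun s hs y => ?_⟩
    have hexp : exp (-ζ * s) ≤ exp (|ζ| * T) :=
      exp_le_exp.2 (mul_le_mul (neg_le_abs ζ) hs.2 hs.1 (abs_nonneg ζ))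
    calc exp (-ζ * s) * (u s y - w s y) ≤ exp (-ζ * s) * max C 0 := by
          gcongr; exact (hC s hs y).trans (le_max_left _ _)
      _ ≤ exp (|ζ| * T) * max C 0 := by gcongr
  · intro y s hs
    exact ((differentiableAt_id.const_mul (-ζ)).exp).mul ((hu_t y s hs).sub (hw_t y s hs))
  · intro s hs
    exact contDiff_const.mul ((hu_x s hs).sub (hw_x s hs))
  · intro s hs y
    have hderiv : HasDerivAt (fun s => exp (-ζ * s) * (u s y - w s y))
        (exp (-ζ * s) * (deriv (fun s => u s y) s - deriv (fun s => w s y) s)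
          - ζ * (exp (-ζ * s) * (u s y - w s y))) s :=
      (((hasDerivAt_id s).const_mul (-ζ)).exp.mul
        ((hu_t y s hs).hasDerivAt.sub (hw_t y s hs).hasDerivAt)).congr_deriv (by simp only [id_eq, neg_mul, mul_one, mul_neg, Pi.sub_apply]; ring)
    rw [hderiv.deriv, laplacian_const_mul _ ((hu_x s hs).sub (hw_x s hs)),
      laplacian_sub (hu_x s hs) (hw_x s hs)]
    have := mul_le_mul_of_nonneg_left (add_le_add (hu s hs y) (hw s hs y)) (exp_pos (-ζ * s)).le
    nlinarith

theorem subsolution_le_planeWave {ζ M R k : ℝ} {u : ℝ → EuclideanSpace ℝ (Fin N) → ℝ}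
    (hcont : ContinuousOn (Function.uncurry u) (Ici 0 ×ˢ univ))
    (hbdd : ∀ T > (0 : ℝ), ∃ C, ∀ t ∈ Icc 0 T, ∀ x, u t x ≤ C)
    (htdiff : ∀ x, ∀ t > (0 : ℝ), DifferentiableAt ℝ (fun s => u s x) t)
    (hxdiff : ∀ t > (0 : ℝ), ContDiff ℝ 2 (u t))
    (hsub : ∀ t > (0 : ℝ), ∀ x, deriv (fun s => u s x) t ≤ laplacian (u t) x + ζ * u t x)
    (hM : ∀ x, u 0 x ≤ M) (hM0 : 0 ≤ M) (hR : tsupport (u 0) ⊆ closedBall 0 R) (hk : 0 ≤ k)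
    {e : EuclideanSpace ℝ (Fin N)} (he : ‖e‖ = 1) {t : ℝ} (ht : 0 ≤ t)
    (x : EuclideanSpace ℝ (Fin N)) : u t x ≤ planeWave ζ (M * exp (k * R)) k e t x := by
  refine subsolution_le_supersolution hcont (continuous_uncurry_planeWave ..).continuousOn ?_
    htdiff (fun y s _ => (hasDerivAt_planeWave ..).differentiableAt) hxdiff
    (fun s _ => contDiff_planeWave ..) hsub
    (fun s _ y => (deriv_planeWave_eq_laplacian_add ζ _ k e he s y).ge) (fun y => ?_) ht x
  · intro T hT
    obtain ⟨C, hC⟩ := hbdd T hT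
    exact ⟨C, fun s hs y => by
      linarith [hC s hs y, planeWave_nonneg ζ k e (by positivity : 0 ≤ M * exp (k * R)) s y]⟩
  · calc u 0 y ≤ M * exp (k * (R - ⟪y, e⟫)) := le_mul_exp_of_tsupport_subset hM hM0 hR hk he.le y
      _ = planeWave ζ (M * exp (k * R)) k e 0 y := by
        rw [planeWave, mul_assoc, ← exp_add]
        ring_nf

end HeatEquation

theorem subsolution_finite_speed_of_spreading_general
    {N : ℕ} (ζ : ℝ) (hζ : 0 < ζ)
    (u : ℝ → EuclideanSpace ℝ (Fin N) → ℝ)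
    (hcont : ContinuousOn (Function.uncurry u)
      (Set.Ici (0:ℝ) ×ˢ (Set.univ : Set (EuclideanSpace ℝ (Fin N)))))
    (hbdd : ∀ T > (0:ℝ), ∃ C : ℝ, ∀ t ∈ Set.Icc (0:ℝ) T, ∀ x, |u t x| ≤ C)
    (htdiff : ∀ x, ∀ t > (0:ℝ), DifferentiableAt ℝ (fun s => u s x) t)
    (hxdiff : ∀ t > (0:ℝ), ContDiff ℝ 2 (u t))
    (hsupp : HasCompactSupport (u 0))
    (hsub : ∀ t > (0:ℝ), ∀ x, deriv (fun s => u s x) t ≤ laplacian (u t) x + ζ * u t x) :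
    ∀ c > 2 * Real.sqrt ζ, ∀ ε > (0:ℝ), ∃ t₀ : ℝ, ∀ t ≥ t₀,
      ∀ x : EuclideanSpace ℝ (Fin N), c * t ≤ ‖x‖ → u t x ≤ ε := by
  intro c hc ε hε
  obtain ⟨R, hR⟩ := hsupp.isBounded.subset_closedBall 0
  obtain ⟨M, hM⟩ := (hcont.comp_continuous (continuous_const.prodMk continuous_id)
    fun x => ⟨mem_Ici.2 le_rfl, trivial⟩).bddAbove_range_of_hasCompactSupport hsupp
  set A := max M 0 * exp (√ζ * R)
  have hgap : 0 < √ζ * c - 2 * ζ := by nlinarith [Real.mul_self_sqrt hζ.le, Real.sqrt_pos.2 hζ]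
  obtain ⟨t₀, ht₀⟩ := eventually_atTop.1 <|
    ((tendsto_exp_neg_atTop_nhds_zero.comp (tendsto_id.const_mul_atTop hgap)).const_mul
      A).eventually (Iio_mem_nhds (by simpa using hε))
  refine ⟨max t₀ 1, fun t ht x hx => ?_⟩
  have ht1 : 1 ≤ t := le_of_max_le_right ht
  have hx0 : x ≠ 0 := by
    have hct : 0 < c * t := mul_pos (by linarith [Real.sqrt_nonneg ζ]) (by linarith)
    exact norm_pos_iff.1 (hct.trans_le hx)
  calc u t x ≤ planeWave ζ A √ζ (‖x‖⁻¹ • x) t x :=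
        subsolution_le_planeWave hcont
          (fun T hT => (hbdd T hT).imp fun C hC s hs y => (le_abs_self _).trans (hC s hs y))
          htdiff hxdiff hsub (fun y => (hM ⟨y, rfl⟩).trans (le_max_left M 0)) (le_max_right M 0)
          hR (Real.sqrt_nonneg ζ) (norm_smul_inv_norm hx0) (by linarith) x
    _ = A * exp (2 * ζ * t - √ζ * ‖x‖) := by
        rw [planeWave_inv_norm_smul_self, Real.sq_sqrt hζ.le]
        ring_nf
    _ ≤ A * exp (-((√ζ * c - 2 * ζ) * t)) := by
        gcongr
        nlinarith [mul_le_mul_of_nonneg_left hx (Real.sqrt_nonneg ζ)]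
    _ ≤ ε := (ht₀ t (le_of_max_le_left ht)).le

/-- A nonnegative subsolution of `∂ₜ u = Δu + ζu` with compactly supported
initial datum spreads at speed at most `c* = 2√ζ`: for every `c > 2√ζ`,
`sup_{|x| ≥ ct} u(t,x) → 0` as `t → ∞` (expressed in `ε`-form, using `u ≥ 0`). -/
theorem subsolution_finite_speed_of_spreading
    {N : ℕ} (hN : 0 < N) (ζ : ℝ) (hζ : 0 < ζ)
    (u : ℝ → EuclideanSpace ℝ (Fin N) → ℝ)
    (hcont : ContinuousOn (Function.uncurry u)
      (Set.Ici (0:ℝ) ×ˢ (Set.univ : Set (EuclideanSpace ℝ (Fin N)))))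
    (hnn : ∀ t ≥ (0:ℝ), ∀ x, 0 ≤ u t x)
    (hbdd : ∀ T > (0:ℝ), ∃ C : ℝ, ∀ t ∈ Set.Icc (0:ℝ) T, ∀ x, |u t x| ≤ C)
    (htdiff : ∀ x, ∀ t > (0:ℝ), DifferentiableAt ℝ (fun s => u s x) t)
    (hxdiff : ∀ t > (0:ℝ), ContDiff ℝ 2 (u t))
    (hsupp : HasCompactSupport (u 0))
    (hsub : ∀ t > (0:ℝ), ∀ x, deriv (fun s => u s x) t ≤ laplacian (u t) x + ζ * u t x) :
    ∀ c > 2 * Real.sqrt ζ, ∀ ε > (0:ℝ), ∃ t₀ : ℝ, ∀ t ≥ t₀,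
      ∀ x : EuclideanSpace ℝ (Fin N), c * t ≤ ‖x‖ → u t x ≤ ε :=
  subsolution_finite_speed_of_spreading_general ζ hζ u hcont hbdd htdiff hxdiff hsupp hsub
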